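/- For an integer k ≥ 2 and w ∈ [0, 1/2], let g(w) = (w/(2k))³·C(2k,3) + (w/(2k))²·C(2k,2)·(1−w) + 11w³/54 − 5w²/9 + 5w/18 + 1/27. Then g is increasing on [0, 1/2]. -/

import Mathlib

/-!
Expanding the binomial coefficients, `g` is the cubic
`(1/(12k²) - 7/54) w³ - (1/(4k) + 1/18) w² + 5w/18 + 1/27`. Its derivative is a concave
quadratic, so on `[0, 1/2]` it is bounded below by its values at the endpoints: `5/18` at `0`
and `1/8 - 1/(4k) + 1/(16k²)` at `1/2`, both positive for `k ≥ 2`.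
-/

theorem Nat.cast_choose_three {K : Type*} [Field K] [CharZero K] (a : ℕ) :
    (a.choose 3 : K) = a * (a - 1) * (a - 2) / 6 := by
  rw [Nat.cast_choose_eq_descPochhammer_div]
  simp [descPochhammer_succ_eval, Nat.factorial]

theorem nonneg_of_concave_quadratic {p q r a b w : ℝ} (hp : p ≤ 0)
    (ha : 0 ≤ p * a ^ 2 + q * a + r) (hb : 0 ≤ p * b ^ 2 + q * b + r) (hw : w ∈ Set.Icc a b) :
    0 ≤ p * w ^ 2 + q * w + r := by
  obtain ⟨haw, hwb⟩ := hw
  rcases (haw.trans hwb).eq_or_lt with rfl | hab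
  · obtain rfl : w = a := le_antisymm hwb haw
    exact ha
  have chord : (b - a) * (p * w ^ 2 + q * w + r) = (b - w) * (p * a ^ 2 + q * a + r)
      + (w - a) * (p * b ^ 2 + q * b + r) + (b - a) * -p * ((w - a) * (b - w)) := by ring
  refine nonneg_of_mul_nonneg_right (a := b - a) ?_ (sub_pos.2 hab)
  rw [chord]
  have := sub_nonneg.2 haw
  have := sub_nonneg.2 hwb
  have := sub_pos.2 hab
  have : 0 ≤ -p := by linarith
  positivity

theorem monotoneOn_cubic_of_deriv_nonneg {a b c d : ℝ} {s : Set ℝ} (hs : Convex ℝ s)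
    (h : ∀ w ∈ interior s, 0 ≤ 3 * a * w ^ 2 + 2 * b * w + c) :
    MonotoneOn (fun w => a * w ^ 3 + b * w ^ 2 + c * w + d) s := by
  refine monotoneOn_of_hasDerivWithinAt_nonneg hs (by fun_prop) (fun w _ => ?_) h
  refine HasDerivAt.hasDerivWithinAt ?_
  convert ((((hasDerivAt_pow 3 w).const_mul a).add ((hasDerivAt_pow 2 w).const_mul b)).add
    ((hasDerivAt_id w).const_mul c)).add_const d using 1
  · rfl
  · push_cast; ring

theorem stmt_9 (k : ℕ) (hk : 2 ≤ k) :
    MonotoneOn (fun w : ℝ => (w/(2*k))^3 * (Nat.choose (2*k) 3 : ℝ)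
        + (w/(2*k))^2 * (Nat.choose (2*k) 2 : ℝ) * (1 - w)
        + 11*w^3/54 - 5*w^2/9 + 5*w/18 + 1/27)
      (Set.Icc 0 (1/2)) := by
  have hk' : (2 : ℝ) ≤ k := by exact_mod_cast hk
  convert monotoneOn_cubic_of_deriv_nonneg (a := 1 / (12 * (k : ℝ) ^ 2) - 7 / 54)
    (b := -(1 / (4 * (k : ℝ)) + 1 / 18)) (c := 5 / 18) (d := 1 / 27) (convex_Icc 0 (1 / 2))
    fun w hw => nonneg_of_concave_quadratic ?_ ?_ ?_ (interior_subset hw) using 1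
  · ext w
    rw [Nat.cast_choose_three, Nat.cast_choose_two]
    field_simp
    push_cast
    ring
  · have : 1 / (12 * (k : ℝ) ^ 2) ≤ 1 / 48 := by
      rw [div_le_div_iff₀ (by positivity) (by norm_num)]; nlinarith
    linarith
  · norm_num
  · have : 1 / (4 * (k : ℝ)) ≤ 1 / 8 := by
      rw [div_le_div_iff₀ (by positivity) (by norm_num)]; linarith
    have : 0 ≤ 1 / (12 * (k : ℝ) ^ 2) := by positivity
    linarith
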